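/- Let f : A ⊕ U → B ⊕ U be a contraction between finite-dimensional Hilbert spaces, and decompose U = U₀ ⊕ U₁ so that f_{UU} = f₀ ⊕ f₁ with f₀ unitary and f₁ completely nonunitary. Then f_{BU₀} = 0, f_{U₁U₀} = 0, f_{U₀A} = 0, f_{U₀U₁} = 0; consequently f_{UU}^k f_{UA} has range in U₁ for all k, and if U₁ ≠ {0} the series ∑_{k=0}^∞ ‖f_{UU}^k f_{UA}‖ converges with sum at most dim(U₁) · (1 − ‖f₁^{dim U₁}‖)⁻¹. -/

import Mathlib

/-!
Writing out `‖f v‖² ≤ ‖v‖²` blockwise for `v = (x, (z, u))` gives one energy inequality. Since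
`f₀` is unitary, feeding in `z` with `x = u = 0` shows the other entries of the `U₀`-column
vanish, and letting `f₀ z` run through all of `U₀` (scaled to infinity along a fixed direction)
shows the other entries of the `U₀`-row vanish. Hence `f_{UU}ᵏ f_{UA} = f₁ᵏ f_{U₁A}`.

For a contraction `T` on a `d`-dimensional space, the subspaces `Eₙ = {x | ‖Tⁿ x‖ = ‖x‖}`
decrease, so `Eₙ₊₁ = Eₙ` for some `n ≤ d`; such an `Eₙ` is `T`-invariant with `T` isometric,
hence unitary, on it. If `T` is completely nonunitary this forces `E_d = 0`, and compactness of
the unit sphere gives `‖T^d‖ < 1`. The series is then dominated by `∑ₖ ‖T^d‖^⌊k/d⌋`.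
-/

open ContinuousLinearMap Module

theorem eq_zero_of_forall_norm_add_sq_le {E : Type*} [NormedAddCommGroup E] [NormedSpace ℝ E]
    {w : E} {r : ℝ} (h : ∀ z : E, ‖w + z‖ ^ 2 ≤ r + ‖z‖ ^ 2) : w = 0 := by
  have hscale (n : ℕ) : (2 * n + 1) * ‖w‖ ^ 2 ≤ r := by
    have := h ((n : ℝ) • w)
    rw [← one_smul ℝ w, smul_smul, mul_one, ← add_smul, norm_smul, norm_smul,
      Real.norm_of_nonneg (by positivity), Real.norm_natCast] at this
    nlinarith
  by_contra hw
  have hpos : 0 < ‖w‖ ^ 2 := by positivity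
  obtain ⟨n, hn⟩ := exists_nat_gt (r / ‖w‖ ^ 2)
  rw [div_lt_iff₀ hpos] at hn
  nlinarith [hscale n]

theorem eq_zero_of_forall_norm_add_isometry_sq_le {E F : Type*} [NormedAddCommGroup E]
    [NormedSpace ℝ E] [SeminormedAddCommGroup F] {u : F → E} (hu : ∀ y, ‖u y‖ = ‖y‖)
    (hu_surj : Function.Surjective u) {w : E} {r : ℝ}
    (h : ∀ y, ‖w + u y‖ ^ 2 ≤ r + ‖y‖ ^ 2) : w = 0 :=
  eq_zero_of_forall_norm_add_sq_le fun z => by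
    obtain ⟨y, rfl⟩ := hu_surj z
    rw [hu]
    exact h y

theorem norm_pow_le_norm_pow_pow_div {R : Type*} [SeminormedRing R] [NormOneClass R] {a : R}
    (ha : ‖a‖ ≤ 1) (k d : ℕ) : ‖a ^ k‖ ≤ ‖a ^ d‖ ^ (k / d) := by
  conv_lhs => rw [← Nat.div_add_mod k d, pow_add, pow_mul]
  calc ‖(a ^ d) ^ (k / d) * a ^ (k % d)‖
      ≤ ‖(a ^ d) ^ (k / d)‖ * ‖a ^ (k % d)‖ := norm_mul_le _ _
    _ ≤ ‖a ^ d‖ ^ (k / d) * 1 := by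
      gcongr
      · exact norm_pow_le _ _
      · exact (norm_pow_le _ _).trans (pow_le_one₀ (norm_nonneg _) ha)
    _ = ‖a ^ d‖ ^ (k / d) := mul_one _

theorem hasSum_pow_div {c : ℝ} (hc₀ : 0 ≤ c) (hc₁ : c < 1) (d : ℕ) [NeZero d] :
    HasSum (fun k : ℕ => c ^ (k / d)) (d * (1 - c)⁻¹) := by
  have hgeom := hasSum_geometric_of_lt_one hc₀ hc₁
  have hone : HasSum (fun _ : Fin d => (1 : ℝ)) d := by
    simpa using hasSum_fintype (fun _ : Fin d => (1 : ℝ))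
  have hprod : HasSum (fun p : ℕ × Fin d => c ^ p.1 * 1) ((1 - c)⁻¹ * d) :=
    hgeom.mul hone <| summable_mul_of_summable_norm (f := fun n => c ^ n) (g := fun _ => 1)
      (by simpa [abs_of_nonneg hc₀] using hgeom.summable) Summable.of_finite
  rw [← (Nat.divModEquiv d).symm.hasSum_iff, mul_comm]
  convert hprod using 2 with p
  rw [Function.comp_apply, Nat.divModEquiv_symm_apply, add_comm,
    Nat.add_mul_div_right _ _ (NeZero.pos d), Nat.div_eq_of_lt p.2.is_lt, zero_add, mul_one]

theorem summable_and_tsum_le_of_le_norm_pow {R : Type*} [SeminormedRing R] [NormOneClass R]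
    {a : R} (ha : ‖a‖ ≤ 1) {d : ℕ} (hd : 0 < d) (had : ‖a ^ d‖ < 1) {b : ℕ → ℝ}
    (hb₀ : ∀ k, 0 ≤ b k) (hb : ∀ k, b k ≤ ‖a ^ k‖) :
    Summable b ∧ ∑' k, b k ≤ d * (1 - ‖a ^ d‖)⁻¹ := by
  have : NeZero d := ⟨hd.ne'⟩
  have hle (k : ℕ) : b k ≤ ‖a ^ d‖ ^ (k / d) := (hb k).trans (norm_pow_le_norm_pow_pow_div ha k d)
  have hgeom := hasSum_pow_div (norm_nonneg _) had d
  have hb_sum := hgeom.summable.of_nonneg_of_le hb₀ hle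
  exact ⟨hb_sum, hasSum_le hle hb_sum.hasSum hgeom⟩

theorem Submodule.exists_le_finrank_eq_succ_of_antitone {K V : Type*} [DivisionRing K]
    [AddCommGroup V] [Module K V] [FiniteDimensional K V] {E : ℕ → Submodule K V}
    (hE : Antitone E) : ∃ n ≤ finrank K V, E (n + 1) = E n := by
  by_contra! hne
  have hdrop (n : ℕ) (hn : n ≤ finrank K V + 1) : finrank K (E n) + n ≤ finrank K V := by
    induction n with
    | zero => simpa using Submodule.finrank_le (E 0)
    | succ n ih =>
      have := Submodule.finrank_lt_finrank_of_lt
        (lt_of_le_of_ne (hE (by omega : n ≤ n + 1)) (hne n (by omega)))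
      have := ih (by omega)
      omega
  have := hdrop _ le_rfl
  omega

namespace ContinuousLinearMap

section Normed

variable {𝕜 E F : Type*} [NontriviallyNormedField 𝕜] [SeminormedAddCommGroup E]
  [NormedSpace 𝕜 E] [SeminormedAddCommGroup F] [NormedSpace 𝕜 F]

theorem norm_apply_le_of_norm_le_one {S : E →L[𝕜] F} (hS : ‖S‖ ≤ 1) (x : E) : ‖S x‖ ≤ ‖x‖ :=
  (S.le_of_opNorm_le hS x).trans_eq (one_mul _)

theorem norm_le_one_of_forall_norm_apply_le {S : E →L[𝕜] F} (hS : ∀ x, ‖S x‖ ≤ ‖x‖) :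
    ‖S‖ ≤ 1 :=
  S.opNorm_le_bound zero_le_one fun x => (hS x).trans_eq (one_mul _).symm

theorem norm_pow_le_one {T : E →L[𝕜] E} (hT : ‖T‖ ≤ 1) (n : ℕ) : ‖T ^ n‖ ≤ 1 := by
  rcases Nat.eq_zero_or_pos n with rfl | hn
  · exact norm_id_le
  · exact (norm_pow_le' T hn).trans (pow_le_one₀ (norm_nonneg T) hT)

end Normed

theorem norm_lt_one_of_forall_norm_apply_lt {𝕜 E F : Type*} [RCLike 𝕜]
    [NormedAddCommGroup E] [NormedSpace 𝕜 E] [FiniteDimensional 𝕜 E] [Nontrivial E]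
    [SeminormedAddCommGroup F] [NormedSpace 𝕜 F] (S : E →L[𝕜] F)
    (h : ∀ x, x ≠ 0 → ‖S x‖ < ‖x‖) : ‖S‖ < 1 := by
  let _ := NormedSpace.restrictScalars ℝ 𝕜 E
  have _ := FiniteDimensional.proper_rclike 𝕜 E
  rw [← S.sSup_sphere_eq_norm, (isCompact_sphere 0 1).sSup_lt_iff_of_continuous
    (NormedSpace.sphere_nonempty.mpr zero_le_one) S.continuous.norm.continuousOn]
  intro x hx
  rw [mem_sphere_zero_iff_norm] at hx
  simpa [hx] using h x (by rintro rfl; simp at hx)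

variable {𝕜 V W : Type*} [RCLike 𝕜] [NormedAddCommGroup V] [InnerProductSpace 𝕜 V]
  [CompleteSpace V] [NormedAddCommGroup W] [InnerProductSpace 𝕜 W] [CompleteSpace W]

theorem adjoint_apply_apply_eq_self_iff {S : V →L[𝕜] W} (hS : ‖S‖ ≤ 1) (x : V) :
    adjoint S (S x) = x ↔ ‖S x‖ = ‖x‖ := by
  have hre : RCLike.re (inner 𝕜 (adjoint S (S x)) x) = ‖S x‖ ^ 2 := by
    rw [adjoint_inner_left, inner_self_eq_norm_sq]
  constructor
  · intro h
    rw [h, inner_self_eq_norm_sq] at hre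
    exact ((sq_eq_sq₀ (norm_nonneg _) (norm_nonneg _)).mp hre).symm
  · intro h
    have hadj : ‖adjoint S (S x)‖ ≤ ‖S x‖ :=
      norm_apply_le_of_norm_le_one (by rwa [LinearIsometryEquiv.norm_map]) (S x)
    have : ‖adjoint S (S x) - x‖ ^ 2 ≤ 0 := by
      rw [norm_sub_sq (𝕜 := 𝕜), hre, ← h]
      nlinarith [norm_nonneg (adjoint S (S x)), norm_nonneg (S x)]
    rw [← sub_eq_zero, ← norm_eq_zero]
    nlinarith [norm_nonneg (adjoint S (S x) - x)]

/-- For `‖S‖ ≤ 1`, the vectors whose norm `S` preserves; written as the kernel of `S† S - 1` so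
that it is visibly a subspace. -/
noncomputable def isometricSubspace (S : V →L[𝕜] W) : Submodule 𝕜 V :=
  LinearMap.ker ((adjoint S ∘L S - 1 : V →L[𝕜] V) : V →ₗ[𝕜] V)

theorem mem_isometricSubspace {S : V →L[𝕜] W} (hS : ‖S‖ ≤ 1) {x : V} :
    x ∈ S.isometricSubspace ↔ ‖S x‖ = ‖x‖ := by
  rw [isometricSubspace, LinearMap.mem_ker, coe_coe, sub_apply, comp_apply, one_apply_eq_self,
    sub_eq_zero, adjoint_apply_apply_eq_self_iff hS]

variable {T : V →L[𝕜] V}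

theorem mem_isometricSubspace_pow_succ (hT : ‖T‖ ≤ 1) {n : ℕ} {x : V} :
    x ∈ (T ^ (n + 1)).isometricSubspace ↔ ‖T x‖ = ‖x‖ ∧ T x ∈ (T ^ n).isometricSubspace := by
  rw [mem_isometricSubspace (norm_pow_le_one hT _), mem_isometricSubspace (norm_pow_le_one hT _),
    pow_succ, mul_apply_eq_comp]
  have h₁ := norm_apply_le_of_norm_le_one (norm_pow_le_one hT n) (T x)
  have h₂ := norm_apply_le_of_norm_le_one hT x
  constructor
  · intro h
    exact ⟨le_antisymm h₂ (h ▸ h₁), le_antisymm h₁ (h ▸ h₂)⟩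
  · rintro ⟨h, h'⟩
    rw [h', h]

theorem antitone_isometricSubspace_pow (hT : ‖T‖ ≤ 1) :
    Antitone fun n => (T ^ n).isometricSubspace := by
  refine antitone_nat_of_succ_le fun n x hx => ?_
  rw [mem_isometricSubspace (norm_pow_le_one hT _)] at hx ⊢
  have h₁ := norm_apply_le_of_norm_le_one (norm_pow_le_one hT n) x
  have h₂ := norm_apply_le_of_norm_le_one hT ((T ^ n) x)
  rw [pow_succ', mul_apply_eq_comp] at hx
  exact le_antisymm h₁ (hx ▸ h₂)

def IsCompletelyNonunitary (T : V →L[𝕜] V) : Prop :=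
  ∀ K : Submodule 𝕜 V, (∀ x ∈ K, T x ∈ K) → (∀ x ∈ K, adjoint T x ∈ K) →
    (∀ x ∈ K, ‖T x‖ = ‖x‖) → (∀ y ∈ K, ∃ x ∈ K, T x = y) → K = ⊥

variable [FiniteDimensional 𝕜 V]

/-- An isometry of a finite-dimensional subspace onto itself is unitary there, so the subspace
also reduces `T`. -/
theorem IsCompletelyNonunitary.eq_bot_of_isometric (hcnu : T.IsCompletelyNonunitary)
    (hT : ‖T‖ ≤ 1) {K : Submodule 𝕜 V} (hK : ∀ x ∈ K, T x ∈ K)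
    (hK_iso : ∀ x ∈ K, ‖T x‖ = ‖x‖) : K = ⊥ := by
  have hsurj : ∀ y ∈ K, ∃ x ∈ K, T x = y := by
    have hinj : Function.Injective ((T : V →ₗ[𝕜] V).restrict hK) := by
      refine (injective_iff_map_eq_zero _).mpr fun x hx => Subtype.ext ?_
      rw [Submodule.coe_zero, ← norm_eq_zero, ← hK_iso x x.2]
      simpa using congrArg Subtype.val hx
    intro y hy
    obtain ⟨x, hx⟩ := LinearMap.injective_iff_surjective.mp hinj ⟨y, hy⟩
    exact ⟨x, x.2, congrArg Subtype.val hx⟩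
  refine hcnu K hK (fun y hy => ?_) hK_iso hsurj
  obtain ⟨x, hx, rfl⟩ := hsurj y hy
  rwa [(adjoint_apply_apply_eq_self_iff hT x).mpr (hK_iso x hx)]

theorem IsCompletelyNonunitary.isometricSubspace_pow_finrank_eq_bot
    (hcnu : T.IsCompletelyNonunitary) (hT : ‖T‖ ≤ 1) :
    (T ^ finrank 𝕜 V).isometricSubspace = ⊥ := by
  obtain ⟨n, hn, hstab⟩ :=
    Submodule.exists_le_finrank_eq_succ_of_antitone (antitone_isometricSubspace_pow hT)
  have hbot : (T ^ n).isometricSubspace = ⊥ := by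
    refine hcnu.eq_bot_of_isometric hT (fun x hx => ?_) (fun x hx => ?_)
    · rw [← hstab, mem_isometricSubspace_pow_succ hT] at hx
      exact hx.2
    · rw [← hstab, mem_isometricSubspace_pow_succ hT] at hx
      exact hx.1
  exact eq_bot_iff.mpr (hbot ▸ antitone_isometricSubspace_pow hT hn)

theorem IsCompletelyNonunitary.norm_pow_finrank_lt_one [Nontrivial V]
    (hcnu : T.IsCompletelyNonunitary) (hT : ‖T‖ ≤ 1) : ‖T ^ finrank 𝕜 V‖ < 1 := by
  refine norm_lt_one_of_forall_norm_apply_lt _ fun x hx => ?_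
  refine lt_of_le_of_ne (norm_apply_le_of_norm_le_one (norm_pow_le_one hT _) x) fun h => hx ?_
  rw [← Submodule.mem_bot 𝕜, ← hcnu.isometricSubspace_pow_finrank_eq_bot hT,
    mem_isometricSubspace (norm_pow_le_one hT _)]
  exact h

end ContinuousLinearMap

theorem stmt11_general {A B U₀ U₁ : Type*}
    [NormedAddCommGroup A] [InnerProductSpace ℂ A]
    [NormedAddCommGroup B] [InnerProductSpace ℂ B]
    [NormedAddCommGroup U₀] [InnerProductSpace ℂ U₀]
    [NormedAddCommGroup U₁] [InnerProductSpace ℂ U₁] [FiniteDimensional ℂ U₁]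
    (f : WithLp 2 (A × WithLp 2 (U₀ × U₁)) →L[ℂ] WithLp 2 (B × WithLp 2 (U₀ × U₁)))
    (hf : ∀ v, ‖f v‖ ≤ ‖v‖)
    (fBA : A →L[ℂ] B) (fBU : WithLp 2 (U₀ × U₁) →L[ℂ] B)
    (fUA : A →L[ℂ] WithLp 2 (U₀ × U₁))
    (fUU : WithLp 2 (U₀ × U₁) →L[ℂ] WithLp 2 (U₀ × U₁))
    (hblock : ∀ (x : A) (u : WithLp 2 (U₀ × U₁)),
        f ((WithLp.equiv 2 (A × WithLp 2 (U₀ × U₁))).symm (x, u))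
          = (WithLp.equiv 2 (B × WithLp 2 (U₀ × U₁))).symm (fBA x + fBU u, fUA x + fUU u))
    (f00 : U₀ →L[ℂ] U₀) (f01 : U₁ →L[ℂ] U₀) (f10 : U₀ →L[ℂ] U₁) (f11 : U₁ →L[ℂ] U₁)
    (hUU : ∀ (u0 : U₀) (u1 : U₁),
        fUU ((WithLp.equiv 2 (U₀ × U₁)).symm (u0, u1))
          = (WithLp.equiv 2 (U₀ × U₁)).symm (f00 u0 + f01 u1, f10 u0 + f11 u1))
    (hf00_iso : ∀ u : U₀, ‖f00 u‖ = ‖u‖) (hf00_surj : Function.Surjective f00)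
    (hf11_cnu : ∀ K : Submodule ℂ U₁,
        (∀ x ∈ K, f11 x ∈ K) → (∀ x ∈ K, ContinuousLinearMap.adjoint f11 x ∈ K) →
        (∀ x ∈ K, ‖f11 x‖ = ‖x‖) → (∀ y ∈ K, ∃ x ∈ K, f11 x = y) → K = ⊥) :
    (∀ u0 : U₀, fBU ((WithLp.equiv 2 (U₀ × U₁)).symm (u0, 0)) = 0) ∧
    (∀ u0 : U₀, (WithLp.equiv 2 (U₀ × U₁) (fUU ((WithLp.equiv 2 (U₀ × U₁)).symm (u0, 0)))).2 = 0) ∧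
    (∀ x : A, (WithLp.equiv 2 (U₀ × U₁) (fUA x)).1 = 0) ∧
    (∀ u1 : U₁, (WithLp.equiv 2 (U₀ × U₁) (fUU ((WithLp.equiv 2 (U₀ × U₁)).symm (0, u1)))).1 = 0) ∧
    (∀ (k : ℕ) (x : A), (WithLp.equiv 2 (U₀ × U₁) ((fUU ^ k) (fUA x))).1 = 0) ∧
    (Nontrivial U₁ →
      Summable (fun k : ℕ => ‖(fUU ^ k) ∘L fUA‖) ∧
      ∑' k : ℕ, ‖(fUU ^ k) ∘L fUA‖
        ≤ (Module.finrank ℂ U₁ : ℝ) * (1 - ‖f11 ^ Module.finrank ℂ U₁‖)⁻¹) := by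
  simp only [WithLp.equiv_symm_apply, WithLp.equiv_apply] at hblock hUU ⊢
  have hnorm (x : A) (z : U₀) (u : U₁) :
      ‖fBA x + fBU (WithLp.toLp 2 (z, u))‖ ^ 2 + ‖((fUA x).fst + f01 u) + f00 z‖ ^ 2
        + ‖((fUA x).snd + f11 u) + f10 z‖ ^ 2 ≤ (‖x‖ ^ 2 + ‖u‖ ^ 2) + ‖z‖ ^ 2 := by
    have := pow_le_pow_left₀ (norm_nonneg _) (hf (WithLp.toLp 2 (x, WithLp.toLp 2 (z, u)))) 2
    simpa [hblock, hUU, WithLp.prod_norm_sq_eq_of_L2, add_assoc, add_comm, add_left_comm]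
      using this
  have hcol (z : U₀) : fBU (WithLp.toLp 2 (z, 0)) = 0 ∧ f10 z = 0 := by
    have := hnorm 0 z 0
    simp only [map_zero, WithLp.zero_fst, WithLp.zero_snd, zero_add, hf00_iso, norm_zero] at this
    constructor <;> rw [← norm_eq_zero] <;>
      nlinarith [norm_nonneg (fBU (WithLp.toLp 2 (z, 0))), norm_nonneg (f10 z)]
  have hrow (x : A) (u : U₁) : (fUA x).fst + f01 u = 0 :=
    eq_zero_of_forall_norm_add_isometry_sq_le hf00_iso hf00_surj (r := ‖x‖ ^ 2 + ‖u‖ ^ 2)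
      fun z => by
        linarith [hnorm x z u, sq_nonneg ‖fBA x + fBU (WithLp.toLp 2 (z, u))‖,
          sq_nonneg ‖(fUA x).snd + f11 u + f10 z‖]
  have hfUA (x : A) : (fUA x).fst = 0 := by simpa using hrow x 0
  have hf01 (u : U₁) : f01 u = 0 := by simpa using hrow 0 u
  have hU₁ (x : A) (u : U₁) : ‖(fUA x).snd + f11 u‖ ^ 2 ≤ ‖x‖ ^ 2 + ‖u‖ ^ 2 := by
    have := hnorm x 0 u
    simp only [map_zero, add_zero, norm_zero] at this
    linarith [sq_nonneg ‖fBA x + fBU (WithLp.toLp 2 (0, u))‖, sq_nonneg ‖(fUA x).fst + f01 u‖]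
  have hf11 : ‖f11‖ ≤ 1 :=
    norm_le_one_of_forall_norm_apply_le fun u =>
      (sq_le_sq₀ (norm_nonneg _) (norm_nonneg _)).mp (by simpa using hU₁ 0 u)
  have hfUA_snd (x : A) : ‖(fUA x).snd‖ ≤ ‖x‖ :=
    (sq_le_sq₀ (norm_nonneg _) (norm_nonneg _)).mp (by simpa using hU₁ x 0)
  have hsemiconj : Function.Semiconj (fun u : U₁ => WithLp.toLp 2 ((0 : U₀), u)) ⇑f11 ⇑fUU :=
    fun u => by simp [hUU, hf01]
  have hiter (k : ℕ) (x : A) : (fUU ^ k) (fUA x) = WithLp.toLp 2 (0, (f11 ^ k) (fUA x).snd) := by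
    have hx : fUA x = WithLp.toLp 2 (0, (fUA x).snd) := by rw [← hfUA x]; rfl
    rw [hx, FunLike.coe_pow_eq_iterate, FunLike.coe_pow_eq_iterate,
      ← (hsemiconj.iterate_right k).eq]
    rfl
  refine ⟨fun z => (hcol z).1, fun z => by simp [hUU, (hcol z).2], hfUA,
    fun u => by simp [hUU, hf01], fun k x => by simp [hiter], fun _ => ?_⟩
  refine summable_and_tsum_le_of_le_norm_pow hf11 finrank_pos
    (IsCompletelyNonunitary.norm_pow_finrank_lt_one hf11_cnu hf11)
    (fun _ => opNorm_nonneg _) fun k => opNorm_le_bound _ (norm_nonneg _) fun x => ?_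
  rw [comp_apply, hiter, WithLp.norm_toLp_snd]
  exact (le_opNorm _ _).trans (by gcongr; exact hfUA_snd x)

/-- Let `f : A ⊕ U → B ⊕ U` be a contraction of finite-dimensional Hilbert spaces with
`U = U₀ ⊕ U₁`, where `f_{UU}` decomposes as `f₀ ⊕ f₁` with `f₀` (the `U₀U₀`-block) unitary and
`f₁` (the `U₁U₁`-block) completely nonunitary.  Then `f_{BU₀} = 0`, `f_{U₁U₀} = 0`,
`f_{U₀A} = 0`, `f_{U₀U₁} = 0`; consequently `f_{UU}ᵏ f_{UA}` has range in `U₁` for all `k`,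
and if `U₁ ≠ {0}` the series `∑ ‖f_{UU}ᵏ f_{UA}‖` converges with sum at most
`dim U₁ · (1 − ‖f₁^(dim U₁)‖)⁻¹`. -/
theorem stmt11 {A B U₀ U₁ : Type*}
    [NormedAddCommGroup A] [InnerProductSpace ℂ A] [FiniteDimensional ℂ A]
    [NormedAddCommGroup B] [InnerProductSpace ℂ B] [FiniteDimensional ℂ B]
    [NormedAddCommGroup U₀] [InnerProductSpace ℂ U₀] [FiniteDimensional ℂ U₀]
    [NormedAddCommGroup U₁] [InnerProductSpace ℂ U₁] [FiniteDimensional ℂ U₁]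
    (f : WithLp 2 (A × WithLp 2 (U₀ × U₁)) →L[ℂ] WithLp 2 (B × WithLp 2 (U₀ × U₁)))
    (hf : ∀ v, ‖f v‖ ≤ ‖v‖)
    (fBA : A →L[ℂ] B) (fBU : WithLp 2 (U₀ × U₁) →L[ℂ] B)
    (fUA : A →L[ℂ] WithLp 2 (U₀ × U₁))
    (fUU : WithLp 2 (U₀ × U₁) →L[ℂ] WithLp 2 (U₀ × U₁))
    (hblock : ∀ (x : A) (u : WithLp 2 (U₀ × U₁)),
        f ((WithLp.equiv 2 (A × WithLp 2 (U₀ × U₁))).symm (x, u))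
          = (WithLp.equiv 2 (B × WithLp 2 (U₀ × U₁))).symm (fBA x + fBU u, fUA x + fUU u))
    (f00 : U₀ →L[ℂ] U₀) (f01 : U₁ →L[ℂ] U₀) (f10 : U₀ →L[ℂ] U₁) (f11 : U₁ →L[ℂ] U₁)
    (hUU : ∀ (u0 : U₀) (u1 : U₁),
        fUU ((WithLp.equiv 2 (U₀ × U₁)).symm (u0, u1))
          = (WithLp.equiv 2 (U₀ × U₁)).symm (f00 u0 + f01 u1, f10 u0 + f11 u1))
    (hf00_iso : ∀ u : U₀, ‖f00 u‖ = ‖u‖) (hf00_surj : Function.Surjective f00)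
    (hf11_cnu : ∀ K : Submodule ℂ U₁,
        (∀ x ∈ K, f11 x ∈ K) → (∀ x ∈ K, ContinuousLinearMap.adjoint f11 x ∈ K) →
        (∀ x ∈ K, ‖f11 x‖ = ‖x‖) → (∀ y ∈ K, ∃ x ∈ K, f11 x = y) → K = ⊥) :
    (∀ u0 : U₀, fBU ((WithLp.equiv 2 (U₀ × U₁)).symm (u0, 0)) = 0) ∧
    (∀ u0 : U₀, (WithLp.equiv 2 (U₀ × U₁) (fUU ((WithLp.equiv 2 (U₀ × U₁)).symm (u0, 0)))).2 = 0) ∧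
    (∀ x : A, (WithLp.equiv 2 (U₀ × U₁) (fUA x)).1 = 0) ∧
    (∀ u1 : U₁, (WithLp.equiv 2 (U₀ × U₁) (fUU ((WithLp.equiv 2 (U₀ × U₁)).symm (0, u1)))).1 = 0) ∧
    (∀ (k : ℕ) (x : A), (WithLp.equiv 2 (U₀ × U₁) ((fUU ^ k) (fUA x))).1 = 0) ∧
    (Nontrivial U₁ →
      Summable (fun k : ℕ => ‖(fUU ^ k) ∘L fUA‖) ∧
      ∑' k : ℕ, ‖(fUU ^ k) ∘L fUA‖
        ≤ (Module.finrank ℂ U₁ : ℝ) * (1 - ‖f11 ^ Module.finrank ℂ U₁‖)⁻¹) :=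
  stmt11_general f hf fBA fBU fUA fUU hblock f00 f01 f10 f11 hUU hf00_iso hf00_surj hf11_cnu
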